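/- arXiv:2009.02729 — 4 statements merged into one kernel-verified Lean document; each statement's English description precedes it below -/
import Mathlib

section
/- Let R be a Noetherian commutative ring such that every finitely generated stably free R-module is free, and let L be a free R-module of rank 2n equipped with a perfect alternating R-bilinear pairing ψ: L × L → R. Then L admits a Lagrangian (symplectic) basis, i.e., a basis {x_1,…,x_n, y_1,…,y_n} with ψ(x_i, y_j) = δ_{ij} and ψ(x_i, x_j) = ψ(y_i, y_j) = 0 for all i, j. -/
/-!
Pick `x, y` with `ψ x y = 1`: take `y` a basis vector and `x` the preimage under `ψ` of its
coordinate functional. Then `L = K ⊕ R x ⊕ R y`, where `K` is the `ψ`-orthogonal of `x` and `y`,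
and `ψ` restricts to a perfect alternating pairing on `K`. Since `K × R² ≃ L ≃ R^(2n)`, the module
`K` is stably free, hence free, of rank `2n - 2` by comparing ranks; a symplectic basis of `K`
together with `x, y` is one of `L`, so induction on `n` concludes.
-/

open LinearMap Module

section

variable {R L : Type*} [CommRing R] [AddCommGroup L] [Module R L]
  {ι κ : Type*} [DecidableEq ι] [DecidableEq κ]

def IsSymplecticFamily (ψ : L →ₗ[R] L →ₗ[R] R) (v : ι ⊕ ι → L) : Prop :=
  (∀ i j, ψ (v (.inl i)) (v (.inr j)) = if i = j then 1 else 0) ∧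
  (∀ i j, ψ (v (.inl i)) (v (.inl j)) = 0) ∧
  (∀ i j, ψ (v (.inr i)) (v (.inr j)) = 0)

variable {ψ : L →ₗ[R] L →ₗ[R] R} {x y : L}

theorem IsSymplecticFamily.basis_reindex {e : Basis (ι ⊕ ι) R L}
    (h : IsSymplecticFamily ψ e) (σ : ι ≃ κ) :
    IsSymplecticFamily ψ (e.reindex (σ.sumCongr σ)) := by
  refine ⟨fun i j => ?_, fun i j => ?_, fun i j => ?_⟩ <;>
    simp [h.1, h.2.1, h.2.2, σ.symm.injective.eq_iff]

def hyperbolicComplement (ψ : L →ₗ[R] L →ₗ[R] R) (x y : L) : Submodule R L :=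
  ker (ψ x) ⊓ ker (ψ y)

theorem mem_hyperbolicComplement {z : L} :
    z ∈ hyperbolicComplement ψ x y ↔ ψ x z = 0 ∧ ψ y z = 0 :=
  Iff.rfl

def hyperbolicProj (hψ : ψ.IsAlt) (hxy : ψ x y = 1) : L →ₗ[R] hyperbolicComplement ψ x y :=
  (LinearMap.id + (ψ y).smulRight x - (ψ x).smulRight y).codRestrict _ fun u => by
    simp [mem_hyperbolicComplement, hψ.self_eq_zero, hxy, ← hψ.neg x y]

theorem coe_hyperbolicProj (hψ : ψ.IsAlt) (hxy : ψ x y = 1) (u : L) :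
    (hyperbolicProj hψ hxy u : L) = u + ψ y u • x - ψ x u • y :=
  rfl

theorem hyperbolicProj_of_mem (hψ : ψ.IsAlt) (hxy : ψ x y = 1) {z : L}
    (hz : z ∈ hyperbolicComplement ψ x y) : hyperbolicProj hψ hxy z = ⟨z, hz⟩ := by
  rw [mem_hyperbolicComplement] at hz
  ext
  simp [coe_hyperbolicProj, hz.1, hz.2]

theorem apply_hyperbolicProj (hψ : ψ.IsAlt) (hxy : ψ x y = 1) {z : L}
    (hz : z ∈ hyperbolicComplement ψ x y) (u : L) : ψ z (hyperbolicProj hψ hxy u) = ψ z u := by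
  rw [mem_hyperbolicComplement] at hz
  simp [coe_hyperbolicProj, ← hψ.neg x z, ← hψ.neg y z, hz.1, hz.2]

theorem hyperbolicProj_apply (hψ : ψ.IsAlt) (hxy : ψ x y = 1) {v : L}
    (hv : v ∈ hyperbolicComplement ψ x y) (u : L) : ψ (hyperbolicProj hψ hxy u) v = ψ u v := by
  rw [mem_hyperbolicComplement] at hv
  simp [coe_hyperbolicProj, hv.1, hv.2]

theorem bijective_domRestrict₁₂_hyperbolicComplement (hψ : ψ.IsAlt) (hxy : ψ x y = 1)
    (hperf : Function.Bijective ψ) :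
    Function.Bijective
      (ψ.domRestrict₁₂ (hyperbolicComplement ψ x y) (hyperbolicComplement ψ x y)) := by
  constructor
  · intro z w h
    have : ψ z = ψ w := by
      ext u
      rw [← apply_hyperbolicProj hψ hxy z.2, ← apply_hyperbolicProj hψ hxy w.2]
      exact LinearMap.congr_fun h (hyperbolicProj hψ hxy u)
    exact Subtype.ext (hperf.1 this)
  · intro f
    obtain ⟨w, hw⟩ := hperf.2 (f ∘ₗ hyperbolicProj hψ hxy)
    refine ⟨hyperbolicProj hψ hxy w, LinearMap.ext fun v => ?_⟩
    rw [domRestrict₁₂_apply, hyperbolicProj_apply hψ hxy v.2, hw, LinearMap.comp_apply,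
      hyperbolicProj_of_mem hψ hxy v.2]

def hyperbolicSplitting (hψ : ψ.IsAlt) (hxy : ψ x y = 1) :
    (hyperbolicComplement ψ x y × (R × R)) ≃ₗ[R] L :=
  LinearEquiv.ofLinearMap
    ((hyperbolicComplement ψ x y).subtype.coprod
      ((toSpanSingleton R L x).coprod (toSpanSingleton R L y)))
    ((hyperbolicProj hψ hxy).prod ((-ψ y).prod (ψ x)))
    (LinearMap.ext fun u => by simp [coe_hyperbolicProj])
    (LinearMap.ext fun ⟨z, a, c⟩ => by
      have hz := mem_hyperbolicComplement.mp z.2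
      ext <;> simp [coe_hyperbolicProj, hz.1, hz.2, hψ.self_eq_zero, hxy, ← hψ.neg x y])

theorem hyperbolicSplitting_apply (hψ : ψ.IsAlt) (hxy : ψ x y = 1)
    (z : hyperbolicComplement ψ x y) (p : R × R) :
    hyperbolicSplitting hψ hxy (z, p) = z + (p.1 • x + p.2 • y) :=
  rfl

theorem IsSymplecticFamily.option_elim (hψ : ψ.IsAlt) (hxy : ψ x y = 1) {w : ι ⊕ ι → L}
    (hw : ∀ k, w k ∈ hyperbolicComplement ψ x y) (h : IsSymplecticFamily ψ w) :
    IsSymplecticFamily ψ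
      (Sum.elim (Option.elim · x (w ∘ .inl)) (Option.elim · y (w ∘ .inr))) := by
  have hxw k : ψ x (w k) = 0 := (hw k).1
  have hyw k : ψ y (w k) = 0 := (hw k).2
  have hwx k : ψ (w k) x = 0 := hψ.eq_iff.mp (hxw k)
  have hwy k : ψ (w k) y = 0 := hψ.eq_iff.mp (hyw k)
  refine ⟨?_, ?_, ?_⟩ <;> rintro (_ | i) (_ | j) <;>
    simp [hψ.self_eq_zero, hxy, hxw, hyw, hwx, hwy, h.1, h.2.1, h.2.2]

theorem exists_isSymplecticFamily_basis_option (hψ : ψ.IsAlt) (hxy : ψ x y = 1)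
    (e : Basis (ι ⊕ ι) R (hyperbolicComplement ψ x y))
    (he : IsSymplecticFamily (ψ.domRestrict₁₂ _ _) e) :
    ∃ f : Basis (Option ι ⊕ Option ι) R L, IsSymplecticFamily ψ f := by
  let σ : (ι ⊕ ι) ⊕ (Unit ⊕ Unit) ≃ Option ι ⊕ Option ι :=
    (Equiv.sumSumSumComm ι ι Unit Unit).trans
      ((Equiv.optionEquivSumPUnit.{0} ι).symm.sumCongr (Equiv.optionEquivSumPUnit.{0} ι).symm)
  let f := ((e.prod ((Basis.singleton Unit R).prod (Basis.singleton Unit R))).map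
    (hyperbolicSplitting hψ hxy)).reindex σ
  have hf : ⇑f = Sum.elim (Option.elim · x (Subtype.val ∘ e ∘ .inl))
      (Option.elim · y (Subtype.val ∘ e ∘ .inr)) := by
    ext ((_ | i) | (_ | i)) <;> simp [f, σ, hyperbolicSplitting_apply]
  exact ⟨f, hf ▸ he.option_elim hψ hxy (fun k => (e k).2)⟩

end

def StablyFreeIsFree (R : Type) [CommRing R] : Prop :=
  ∀ (M : Type) [AddCommGroup M] [Module R M], Module.Finite R M →
    (∃ k m : ℕ, Nonempty ((M × (Fin k → R)) ≃ₗ[R] (Fin m → R))) →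
    ∃ n : ℕ, Nonempty (M ≃ₗ[R] (Fin n → R))

theorem nonempty_basis_of_prod_equiv {R : Type} [CommRing R] (hsf : StablyFreeIsFree R)
    {K : Type} [AddCommGroup K] [Module R K] {m : ℕ}
    (e : (K × (R × R)) ≃ₗ[R] (Fin (m + 2) → R)) : Nonempty (Basis (Fin m) R K) := by
  rcases subsingleton_or_nontrivial R with hR | hR
  · have := Module.subsingleton R K
    exact ⟨.ofEquivFun (.ofSubsingleton _ _)⟩
  have : Module.Finite R K := .of_surjective (LinearMap.fst R K (R × R) ∘ₗ e.symm.toLinearMap)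
    fun z => ⟨e (z, 0), by simp⟩
  have e₂ : (K × (Fin 2 → R)) ≃ₗ[R] (Fin (m + 2) → R) :=
    ((LinearEquiv.refl R K).prodCongr (LinearEquiv.piFinTwo R fun _ => R)).trans e
  obtain ⟨m', ⟨g⟩⟩ := hsf K this ⟨2, m + 2, ⟨e₂⟩⟩
  obtain rfl : m' = m := by
    simpa using ((g.prodCongr (LinearEquiv.refl R (R × R))).symm.trans e).finrank_eq
  exact ⟨.ofEquivFun g⟩

theorem exists_isSymplecticFamily_basis {R : Type} [CommRing R] (hsf : StablyFreeIsFree R)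
    (n : ℕ) {L : Type} [AddCommGroup L] [Module R L] (b : Basis (Fin (2 * n)) R L)
    {ψ : L →ₗ[R] L →ₗ[R] R} (hψ : ψ.IsAlt) (hperf : Function.Bijective ψ) :
    ∃ e : Basis (Fin n ⊕ Fin n) R L, IsSymplecticFamily ψ e := by
  induction n generalizing L with
  | zero =>
    exact ⟨b.reindex ((finCongr (mul_zero 2)).trans (Equiv.equivOfIsEmpty _ _)),
      finZeroElim, finZeroElim, finZeroElim⟩
  | succ n ih =>
    let i₀ : Fin (2 * (n + 1)) := ⟨0, by omega⟩
    obtain ⟨x, hx⟩ := hperf.2 (b.coord i₀)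
    have hxy : ψ x (b i₀) = 1 := by simp [hx]
    obtain ⟨bK⟩ := nonempty_basis_of_prod_equiv hsf ((hyperbolicSplitting hψ hxy).trans b.equivFun)
    obtain ⟨e, he⟩ := ih bK (fun z => hψ z)
      (bijective_domRestrict₁₂_hyperbolicComplement hψ hxy hperf)
    obtain ⟨f, hf⟩ := exists_isSymplecticFamily_basis_option hψ hxy e he
    exact ⟨_, hf.basis_reindex (finSuccEquiv n).symm⟩

theorem stmt0_general
    (R : Type) [CommRing R]
    (hstablyfree : ∀ (M : Type) [AddCommGroup M] [Module R M], Module.Finite R M →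
      (∃ k m : ℕ, Nonempty ((M × (Fin k → R)) ≃ₗ[R] (Fin m → R))) →
      ∃ n : ℕ, Nonempty (M ≃ₗ[R] (Fin n → R)))
    (n : ℕ) (L : Type) [AddCommGroup L] [Module R L]
    (b : Module.Basis (Fin (2 * n)) R L)
    (ψ : L →ₗ[R] L →ₗ[R] R)
    (halt : ∀ x, ψ x x = 0)
    (hperf : Function.Bijective fun x : L => ψ x) :
    ∃ e : Module.Basis (Fin n ⊕ Fin n) R L,
      (∀ i j, ψ (e (Sum.inl i)) (e (Sum.inr j)) = if i = j then 1 else 0) ∧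
      (∀ i j, ψ (e (Sum.inl i)) (e (Sum.inl j)) = 0) ∧
      (∀ i j, ψ (e (Sum.inr i)) (e (Sum.inr j)) = 0) :=
  exists_isSymplecticFamily_basis hstablyfree n b halt hperf

/-- Let `R` be a Noetherian commutative ring such that every finitely
generated stably free `R`-module is free, and let `L` be a free `R`-module of rank `2n`
equipped with a perfect alternating `R`-bilinear pairing `ψ`.  Then `L` admits a
Lagrangian (symplectic) basis. -/
theorem stmt0
    (R : Type) [CommRing R] [IsNoetherianRing R]
    (hstablyfree : ∀ (M : Type) [AddCommGroup M] [Module R M], Module.Finite R M →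
      (∃ k m : ℕ, Nonempty ((M × (Fin k → R)) ≃ₗ[R] (Fin m → R))) →
      ∃ n : ℕ, Nonempty (M ≃ₗ[R] (Fin n → R)))
    (n : ℕ) (L : Type) [AddCommGroup L] [Module R L]
    (b : Module.Basis (Fin (2 * n)) R L)
    (ψ : L →ₗ[R] L →ₗ[R] R)
    (halt : ∀ x, ψ x x = 0)
    (hperf : Function.Bijective fun x : L => ψ x) :
    ∃ e : Module.Basis (Fin n ⊕ Fin n) R L,
      (∀ i j, ψ (e (Sum.inl i)) (e (Sum.inr j)) = if i = j then 1 else 0) ∧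
      (∀ i j, ψ (e (Sum.inl i)) (e (Sum.inl j)) = 0) ∧
      (∀ i j, ψ (e (Sum.inr i)) (e (Sum.inr j)) = 0) :=
  stmt0_general R hstablyfree n L b ψ halt hperf
end

section
/- Let R be a Noetherian commutative ring such that every finitely generated stably free R-module is free, and let L be a free R-module of rank 2n with a perfect alternating pairing ψ. If x_1 ∈ L is part of a basis of L and y_1 ∈ L satisfies ψ(x_1, y_1) = 1, then the R-submodule spanned by x_1 and y_1 is free of rank 2, and L decomposes as the direct sum of this submodule and its orthogonal complement L' = {x ∈ L : ψ(x, x_1) = ψ(x, y_1) = 0}, with L' free of rank 2n − 2. -/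
/-! Because `ψ` is alternating, `ψ y₁ x₁ = -1`; pairing with `x₁` and `y₁` shows that they are
independent, and `z ↦ ψ z y₁ • x₁ - ψ z x₁ • y₁` is an idempotent with image `span {x₁, y₁}` and
kernel the orthogonal complement `L'`, whence `L = span {x₁, y₁} ⊕ L'`. Hence `L' × R² ≅ R²ⁿ`, so
`L'` is finitely generated and stably free, therefore free, and comparing ranks gives `2n - 2`. -/

namespace LinearMap

variable {R M : Type*} [CommRing R] [AddCommGroup M] [Module R M]

/-- When `ψ` is alternating and `ψ x y = 1`, this is the projection onto `span {x, y}` along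
the `ψ`-orthogonal complement of `x` and `y`. -/
def symplecticProj (ψ : M →ₗ[R] M →ₗ[R] R) (x y : M) : M →ₗ[R] M :=
  toSpanSingleton R M x ∘ₗ ψ.flip y - toSpanSingleton R M y ∘ₗ ψ.flip x

@[simp]
theorem symplecticProj_apply (ψ : M →ₗ[R] M →ₗ[R] R) (x y z : M) :
    symplecticProj ψ x y z = ψ z y • x - ψ z x • y :=
  rfl

theorem symplecticProj_mem_span (ψ : M →ₗ[R] M →ₗ[R] R) (x y z : M) :
    symplecticProj ψ x y z ∈ Submodule.span R {x, y} :=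
  Submodule.mem_span_pair.mpr ⟨ψ z y, -ψ z x, by simp [sub_eq_add_neg]⟩

namespace IsAlt

variable {ψ : M →ₗ[R] M →ₗ[R] R} (hψ : ψ.IsAlt) {x y : M} (hxy : ψ x y = 1)
include hψ hxy

theorem apply_eq_neg_one_of_apply_eq_one : ψ y x = -1 := by
  rw [← hψ.neg, hxy]

theorem apply_symplecticProj_left (z : M) : ψ (symplecticProj ψ x y z) x = ψ z x := by
  simp [hψ.self_eq_zero, hψ.apply_eq_neg_one_of_apply_eq_one hxy]

theorem apply_symplecticProj_right (z : M) : ψ (symplecticProj ψ x y z) y = ψ z y := by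
  simp [hψ.self_eq_zero, hxy]

theorem linearIndependent_pair_of_apply_eq_one : LinearIndependent R ![x, y] := by
  refine LinearIndependent.pair_iff.mpr fun a b hab => ⟨?_, ?_⟩
  · simpa [hψ.self_eq_zero, hxy] using congr(ψ $hab y)
  · simpa [hψ.self_eq_zero, hψ.apply_eq_neg_one_of_apply_eq_one hxy] using congr(ψ $hab x)

theorem symplecticProj_eq_self_of_mem_span {z : M} (hz : z ∈ Submodule.span R {x, y}) :
    symplecticProj ψ x y z = z := by
  obtain ⟨a, b, rfl⟩ := Submodule.mem_span_pair.mp hz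
  simp [hψ.self_eq_zero, hxy, hψ.apply_eq_neg_one_of_apply_eq_one hxy, sub_eq_add_neg]

theorem ker_symplecticProj :
    ker (symplecticProj ψ x y) = ker (ψ.flip x) ⊓ ker (ψ.flip y) := by
  ext z
  simp only [mem_ker, Submodule.mem_inf, flip_apply]
  refine ⟨fun hz => ?_, fun ⟨hzx, hzy⟩ => by simp [hzx, hzy]⟩
  rw [← hψ.apply_symplecticProj_left hxy, ← hψ.apply_symplecticProj_right hxy, hz]
  simp

theorem isCompl_span_pair_ker_inf_ker :
    IsCompl (Submodule.span R {x, y}) (ker (ψ.flip x) ⊓ ker (ψ.flip y)) := by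
  have := isCompl_of_proj
    (f := (symplecticProj ψ x y).codRestrict _ (symplecticProj_mem_span ψ x y)) fun z => Subtype.ext (hψ.symplecticProj_eq_self_of_mem_span hxy z.2)
  rwa [ker_codRestrict, hψ.ker_symplecticProj hxy] at this

end IsAlt

end LinearMap

namespace Submodule

variable {R M : Type*} [CommRing R] [AddCommGroup M] [Module R M] {P K : Submodule R M}

noncomputable def prodFinFunEquivOfIsCompl {k N : ℕ} (h : IsCompl P K) (bP : Module.Basis (Fin k) R P)
    (bM : Module.Basis (Fin N) R M) : (K × (Fin k → R)) ≃ₗ[R] (Fin N → R) :=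
  LinearEquiv.prodComm R K (Fin k → R) ≪≫ₗ
    bP.equivFun.symm.prodCongr (LinearEquiv.refl R K) ≪≫ₗ
    prodEquivOfIsCompl P K h ≪≫ₗ bM.equivFun

theorem finite_of_isCompl [Module.Finite R M] (h : IsCompl P K) : Module.Finite R K :=
  Module.Finite.of_surjective _ (projectionOnto_surjective h.symm)

end Submodule

theorem Module.Basis.nonempty_of_prod_finFun_equiv {R K : Type*} [CommRing R] [AddCommGroup K]
    [Module R K] {k m N : ℕ} (e : (K × (Fin k → R)) ≃ₗ[R] (Fin N → R))
    (eK : K ≃ₗ[R] (Fin m → R)) : Nonempty (Module.Basis (Fin (N - k)) R K) := by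
  cases subsingleton_or_nontrivial R
  · have := Module.subsingleton R K
    exact ⟨.ofEquivFun (LinearEquiv.ofSubsingleton _ _)⟩
  · have := Module.Free.of_equiv eK.symm
    have := Module.Finite.equiv eK.symm
    have hmk : m + k = N := by
      simpa [Module.finrank_prod, eK.finrank_eq] using e.finrank_eq
    obtain rfl : m = N - k := by omega
    exact ⟨.ofEquivFun eK⟩

theorem stmt1_general
    (R : Type) [CommRing R]
    (hstablyfree : ∀ (M : Type) [AddCommGroup M] [Module R M], Module.Finite R M →
      (∃ k m : ℕ, Nonempty ((M × (Fin k → R)) ≃ₗ[R] (Fin m → R))) →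
      ∃ n : ℕ, Nonempty (M ≃ₗ[R] (Fin n → R)))
    (n : ℕ) (L : Type) [AddCommGroup L] [Module R L]
    (ψ : L →ₗ[R] L →ₗ[R] R)
    (halt : ∀ x, ψ x x = 0)
    (x₁ y₁ : L)
    (hx₁ : ∃ (b : Module.Basis (Fin (2 * n)) R L) (i : Fin (2 * n)), b i = x₁)
    (hy₁ : ψ x₁ y₁ = 1) :
    Nonempty (Module.Basis (Fin 2) R (Submodule.span R {x₁, y₁})) ∧
    IsCompl (Submodule.span R {x₁, y₁})
      (LinearMap.ker (ψ.flip x₁) ⊓ LinearMap.ker (ψ.flip y₁)) ∧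
    Nonempty (Module.Basis (Fin (2 * n - 2)) R
      (LinearMap.ker (ψ.flip x₁) ⊓ LinearMap.ker (ψ.flip y₁) : Submodule R L)) := by
  obtain ⟨b, -⟩ := hx₁
  have hψ : ψ.IsAlt := halt
  have bP : Module.Basis (Fin 2) R (Submodule.span R {x₁, y₁}) := by
    have := Module.Basis.span (hψ.linearIndependent_pair_of_apply_eq_one hy₁)
    rwa [Matrix.range_cons_cons_empty] at this
  have hcompl := hψ.isCompl_span_pair_ker_inf_ker hy₁
  refine ⟨⟨bP⟩, hcompl, ?_⟩
  have e := Submodule.prodFinFunEquivOfIsCompl hcompl bP b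
  have : Module.Finite R L := .of_basis b
  obtain ⟨m, ⟨eK⟩⟩ := hstablyfree _ (Submodule.finite_of_isCompl hcompl) ⟨2, 2 * n, ⟨e⟩⟩
  exact Module.Basis.nonempty_of_prod_finFun_equiv e eK

/-- Let `R` be a Noetherian commutative ring such that every finitely
generated stably free `R`-module is free, and `L` a free `R`-module of rank `2n` with a
perfect alternating pairing `ψ`.  If `x₁ ∈ L` is part of a basis of `L` and `y₁`
satisfies `ψ x₁ y₁ = 1`, then the submodule spanned by `x₁, y₁` is free of rank 2, `L`
is the direct sum of this submodule and its orthogonal complement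
`L' = {x | ψ x x₁ = 0 ∧ ψ x y₁ = 0}`, and `L'` is free of rank `2n − 2`. -/
theorem stmt1
    (R : Type) [CommRing R] [IsNoetherianRing R]
    (hstablyfree : ∀ (M : Type) [AddCommGroup M] [Module R M], Module.Finite R M →
      (∃ k m : ℕ, Nonempty ((M × (Fin k → R)) ≃ₗ[R] (Fin m → R))) →
      ∃ n : ℕ, Nonempty (M ≃ₗ[R] (Fin n → R)))
    (n : ℕ) (L : Type) [AddCommGroup L] [Module R L]
    (ψ : L →ₗ[R] L →ₗ[R] R)
    (halt : ∀ x, ψ x x = 0)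
    (hperf : Function.Bijective fun x : L => ψ x)
    (x₁ y₁ : L)
    (hx₁ : ∃ (b : Module.Basis (Fin (2 * n)) R L) (i : Fin (2 * n)), b i = x₁)
    (hy₁ : ψ x₁ y₁ = 1) :
    Nonempty (Module.Basis (Fin 2) R (Submodule.span R {x₁, y₁})) ∧
    IsCompl (Submodule.span R {x₁, y₁})
      (LinearMap.ker (ψ.flip x₁) ⊓ LinearMap.ker (ψ.flip y₁)) ∧
    Nonempty (Module.Basis (Fin (2 * n - 2)) R
      (LinearMap.ker (ψ.flip x₁) ⊓ LinearMap.ker (ψ.flip y₁) : Submodule R L)) :=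
  stmt1_general R hstablyfree n L ψ halt x₁ y₁ hx₁ hy₁
end

section
/- Let K₀ be a field, O_{K₀} ⊆ K₀ a Dedekind domain with fraction field K₀, K a finite separable field extension of K₀ with ring of integers (maximal O_{K₀}-order) O_K, and (V, ψ) a non-degenerate alternating K₀-bilinear form on a finite-dimensional K-vector space V satisfying ψ(ax, y) = ψ(x, ay) for all a ∈ K. Let ψ_K: V × V → K be the unique K-bilinear form with Tr_{K/K₀} ∘ ψ_K = ψ. Then an O_K-lattice L in V is self-dual with respect to ψ if and only if all invariant factors of L with respect to ψ_K equal the inverse different D_{K/K₀}^{−1}. -/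
/-!
Writing a vector in the symplectic basis as `Σ aᵢ xᵢ + Σ eⱼ yⱼ`, one has `ψK(v, xⱼ) = -eⱼ` and
`ψK(v, yⱼ) = aⱼ`. Hence the dual of `L = Σ O_K xᵢ + Σ 𝔞ⱼ yⱼ` is `Σ 𝔞ᵢ^∨ xᵢ + Σ O_K^∨ yⱼ`, where
`𝔞^∨` is the trace dual, and `L^∨ = L` means `O_K^∨ = 𝔞ⱼ` and `𝔞ⱼ^∨ = O_K`. Since
`O_K^∨ = D_{K/K₀}⁻¹` and duality is an involution on nonzero fractional ideals, the second
condition follows from the first.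
-/

open Module Submodule
open scoped nonZeroDivisors

namespace Module.Basis

variable {ι K V B : Type*} [Field K] [AddCommGroup V] [Module K V] [CommRing B] [Algebra B K]

/-- The lattice `Σᵢ 𝔟ᵢ bᵢ`. -/
def idealLattice (b : Basis ι K V) (𝔟 : ι → Submodule B K) : Set V :=
  {v | ∀ i, b.repr v i ∈ 𝔟 i}

variable (b : Basis ι K V) {𝔟 𝔠 : ι → Submodule B K}

lemma smul_mem_idealLattice {i : ι} {c : K} (hc : c ∈ 𝔟 i) : c • b i ∈ b.idealLattice 𝔟 := by
  classical
  intro k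
  rw [map_smul, repr_self, Finsupp.smul_single, smul_eq_mul, mul_one, Finsupp.single_apply]
  split_ifs with h
  · exact h ▸ hc
  · exact zero_mem _

lemma idealLattice_subset_iff : b.idealLattice 𝔟 ⊆ b.idealLattice 𝔠 ↔ 𝔟 ≤ 𝔠 := by
  refine ⟨fun h i c hc ↦ ?_, fun h v hv i ↦ h i (hv i)⟩
  simpa using h (b.smul_mem_idealLattice hc) i

lemma idealLattice_injective : Function.Injective (b.idealLattice (B := B)) := fun _ _ h ↦
  le_antisymm (b.idealLattice_subset_iff.mp h.le) (b.idealLattice_subset_iff.mp h.ge)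

end Module.Basis

section TraceDual

variable (A K₀ : Type*) {K B V : Type*} [CommRing A] [Field K₀] [Field K] [CommRing B]
  [Algebra A K₀] [Algebra K₀ K] [Algebra A K] [Algebra A B] [Algebra B K]
  [IsScalarTower A K₀ K] [IsScalarTower A B K] [AddCommGroup V] [Module K V]

lemma Submodule.mem_traceDual_one {c : K} :
    c ∈ traceDual A K₀ (1 : Submodule B K) ↔
      ∀ r : B, Algebra.trace K₀ K (c * algebraMap B K r) ∈ Set.range (algebraMap A K₀) := by
  simp [mem_traceDual, mem_one]

def traceDualLattice (ψK : V →ₗ[K] V →ₗ[K] K) (L : Set V) : Set V :=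
  {x | ∀ y ∈ L, Algebra.trace K₀ K (ψK x y) ∈ Set.range (algebraMap A K₀)}

variable {A K₀} {ι : Type*} [Fintype ι]

lemma mem_traceDualLattice_idealLattice_iff (ψK : V →ₗ[K] V →ₗ[K] K) (b : Basis ι K V)
    (𝔟 : ι → Submodule B K) {x : V} :
    x ∈ traceDualLattice A K₀ ψK (b.idealLattice 𝔟) ↔
      ∀ i, ψK x (b i) ∈ traceDual A K₀ (𝔟 i) := by
  refine ⟨fun hx i c hc ↦ ?_, fun hx y hy ↦ ?_⟩
  · simpa [mul_comm] using hx _ (b.smul_mem_idealLattice hc)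
  · rw [← b.sum_repr y, map_sum, map_sum, ← RingHom.coe_range]
    refine sum_mem fun i _ ↦ ?_
    simpa [mul_comm] using hx i _ (hy i)

end TraceDual

section Symplectic

variable {ι K V : Type*} [Field K] [AddCommGroup V] [Module K V] [DecidableEq ι]

/-- `b (inl i)` is `xᵢ` and `b (inr j)` is `yⱼ`. -/
structure Module.Basis.IsSymplectic (ψK : V →ₗ[K] V →ₗ[K] K) (b : Basis (ι ⊕ ι) K V) : Prop where
  inl_inl : ∀ i j, ψK (b (.inl i)) (b (.inl j)) = 0
  inr_inr : ∀ i j, ψK (b (.inr i)) (b (.inr j)) = 0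
  inl_inr : ∀ i j, ψK (b (.inl i)) (b (.inr j)) = if i = j then 1 else 0

variable {ψK : V →ₗ[K] V →ₗ[K] K} {b : Basis (ι ⊕ ι) K V}

lemma Module.Basis.IsSymplectic.apply_inl (hb : b.IsSymplectic ψK) (hψK : ψK.IsAlt) (x : V)
    (j : ι) : ψK x (b (.inl j)) = -b.repr x (.inr j) := by
  refine LinearMap.congr_fun (b.ext (f₁ := ψK.flip (b (.inl j))) (f₂ := -b.coord (.inr j))
    fun k ↦ ?_) x
  rcases k with i | i
  · simp [hb.inl_inl]
  · simp [LinearMap.flip_apply, ← hψK.neg (b (.inl j)), hb.inl_inr, Finsupp.single_apply, eq_comm]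

lemma Module.Basis.IsSymplectic.apply_inr (hb : b.IsSymplectic ψK) (x : V) (j : ι) :
    ψK x (b (.inr j)) = b.repr x (.inl j) := by
  refine LinearMap.congr_fun (b.ext (f₁ := ψK.flip (b (.inr j))) (f₂ := b.coord (.inl j))
    fun k ↦ ?_) x
  rcases k with i | i
  · simp [hb.inl_inr, Finsupp.single_apply]
  · simp [hb.inr_inr]

end Symplectic

section SelfDual

variable {A K₀ K B V ι : Type*} [CommRing A] [Field K₀] [Field K] [CommRing B]
  [Algebra A K₀] [Algebra K₀ K] [Algebra A K] [Algebra A B] [Algebra B K]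
  [IsScalarTower A K₀ K] [IsScalarTower A B K] [AddCommGroup V] [Module K V]
  [Fintype ι] (b : Basis (ι ⊕ ι) K V)

lemma Module.Basis.idealLattice_sumElim_one (𝔞 : ι → Submodule B K) :
    b.idealLattice (Sum.elim (fun _ ↦ 1) 𝔞) =
      {v | ∃ (c : ι → B) (d : ι → K), (∀ j, d j ∈ 𝔞 j) ∧
        v = (∑ i, algebraMap B K (c i) • b (.inl i)) + ∑ j, d j • b (.inr j)} := by
  ext v
  constructor
  · intro hv
    choose c hc using fun i ↦ mem_one.mp (hv (.inl i))
    refine ⟨c, fun j ↦ b.repr v (.inr j), fun j ↦ hv (.inr j), ?_⟩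
    simp only [hc]
    conv_lhs => rw [← b.sum_repr v]
    exact Fintype.sum_sum_type _
  · rintro ⟨c, d, hd, rfl⟩ i
    have hsum : (∑ i, algebraMap B K (c i) • b (.inl i)) + ∑ j, d j • b (.inr j) =
        ∑ k, Sum.elim (fun i ↦ algebraMap B K (c i)) d k • b k := by
      simp [Fintype.sum_sum_type]
    rw [hsum, b.repr_sum_self]
    rcases i with i | i
    · exact mem_one.mpr ⟨c i, rfl⟩
    · exact hd i

variable [DecidableEq ι] {ψK : V →ₗ[K] V →ₗ[K] K} {b}

lemma Module.Basis.IsSymplectic.traceDualLattice_idealLattice (hb : b.IsSymplectic ψK)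
    (hψK : ψK.IsAlt) (𝔟 : ι ⊕ ι → Submodule B K) :
    traceDualLattice A K₀ ψK (b.idealLattice 𝔟) =
      b.idealLattice fun i ↦ Submodule.traceDual A K₀ (𝔟 i.swap) := by
  ext x
  rw [mem_traceDualLattice_idealLattice_iff]
  simp only [Basis.idealLattice, Set.mem_ofPred_eq, Sum.forall, hb.apply_inl hψK, hb.apply_inr,
    neg_mem_iff, Sum.swap_inl, Sum.swap_inr]
  exact and_comm

variable [IsDedekindDomain A] [IsFractionRing A K₀] [FiniteDimensional K₀ K]
  [Algebra.IsSeparable K₀ K] [IsIntegralClosure B A K]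

variable (A K₀ B) in
lemma Submodule.traceDual_traceDual_one :
    traceDual A K₀ (traceDual A K₀ (1 : Submodule B K)) = 1 := by
  have : IsDomain B := (IsIntegralClosure.algebraMap_injective B A K).isDomain _
  have : IsFractionRing B K := IsIntegralClosure.isFractionRing_of_finite_extension A K₀ K B
  have : IsDedekindDomain B := IsIntegralClosure.isDedekindDomain A K₀ K B
  rw [← FractionalIdeal.coe_dual_one,
    ← FractionalIdeal.coe_dual A K₀
      (FractionalIdeal.dual_ne_zero A K₀ (one_ne_zero' (FractionalIdeal B⁰ K))),
    FractionalIdeal.dual_dual, FractionalIdeal.coe_one]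

lemma Module.Basis.IsSymplectic.idealLattice_selfDual_iff (hb : b.IsSymplectic ψK)
    (hψK : ψK.IsAlt) (𝔞 : ι → Submodule B K) :
    traceDualLattice A K₀ ψK (b.idealLattice (Sum.elim (fun _ ↦ 1) 𝔞)) =
        b.idealLattice (Sum.elim (fun _ ↦ 1) 𝔞) ↔
      ∀ j, 𝔞 j = Submodule.traceDual A K₀ 1 := by
  rw [hb.traceDualLattice_idealLattice hψK, b.idealLattice_injective.eq_iff, funext_iff,
    Sum.forall]
  simp only [Sum.swap_inl, Sum.swap_inr, Sum.elim_inl, Sum.elim_inr]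
  refine ⟨fun h j ↦ (h.2 j).symm, fun h ↦ ⟨fun j ↦ ?_, fun j ↦ (h j).symm⟩⟩
  rw [h j, traceDual_traceDual_one]

end SelfDual

theorem stmt6_general
    (A : Type) [CommRing A] [IsDedekindDomain A]
    (K₀ : Type) [Field K₀] [Algebra A K₀] [IsFractionRing A K₀]
    (K : Type) [Field K] [Algebra K₀ K] [FiniteDimensional K₀ K]
    [Algebra.IsSeparable K₀ K]
    (B : Type) [CommRing B] [Algebra A B] [Algebra B K] [Algebra A K]
    [IsScalarTower A B K] [IsScalarTower A K₀ K] [IsIntegralClosure B A K]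
    (V : Type) [AddCommGroup V] [Module K V] [Module K₀ V]
    (n : ℕ)
    (ψK : V →ₗ[K] V →ₗ[K] K)
    (ψ : V →ₗ[K₀] V →ₗ[K₀] K₀)
    (hψ : ∀ x y, ψ x y = Algebra.trace K₀ K (ψK x y))
    (halt : ∀ x, ψK x x = 0)
    -- a symplectic K-basis of (V, ψ_K)
    (b : Module.Basis (Fin n ⊕ Fin n) K V)
    (hbxx : ∀ i j, ψK (b (Sum.inl i)) (b (Sum.inl j)) = 0)
    (hbyy : ∀ i j, ψK (b (Sum.inr i)) (b (Sum.inr j)) = 0)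
    (hbxy : ∀ i j, ψK (b (Sum.inl i)) (b (Sum.inr j)) = if i = j then 1 else 0)
    -- the invariant factors: nonzero fractional O_K-ideals
    (𝔞 : Fin n → Submodule B K)
    -- the lattice L = Σ O_K x_i + Σ 𝔞_j y_j
    (L : Set V)
    (hL : L = {v | ∃ (c : Fin n → B) (d : Fin n → K), (∀ j, d j ∈ 𝔞 j) ∧
      v = (∑ i, algebraMap B K (c i) • b (Sum.inl i))
          + ∑ j, d j • b (Sum.inr j)}) :
    -- L is self-dual ↔ all invariant factors equal the inverse different
    {x : V | ∀ y ∈ L, ψ x y ∈ Set.range (algebraMap A K₀)} = L ↔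
      ∀ j, (𝔞 j : Set K) =
        {c : K | ∀ r : B,
          Algebra.trace K₀ K (c * algebraMap B K r) ∈ Set.range (algebraMap A K₀)} := by
  have hb : b.IsSymplectic ψK := ⟨hbxx, hbyy, hbxy⟩
  have hdual : {x : V | ∀ y ∈ L, ψ x y ∈ Set.range (algebraMap A K₀)} =
      traceDualLattice A K₀ ψK L := by
    simp only [hψ]
    rfl
  have hdiff : (traceDual A K₀ (1 : Submodule B K) : Set K) =
      {c : K | ∀ r : B,
        Algebra.trace K₀ K (c * algebraMap B K r) ∈ Set.range (algebraMap A K₀)} :=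
    Set.ext fun _ ↦ mem_traceDual_one A K₀
  rw [hdual, hL, ← b.idealLattice_sumElim_one, hb.idealLattice_selfDual_iff halt]
  simp only [SetLike.ext'_iff, hdiff]

/-- Let `O_{K₀} = A` be a Dedekind domain with fraction field `K₀`,
`K/K₀` a finite separable field extension with ring of integers (maximal order) `B`,
and `(V, ψ)` a non-degenerate alternating `K₀`-bilinear form on a `K`-vector space
satisfying `ψ(ax, y) = ψ(x, ay)` for `a ∈ K`, with `K`-bilinear lift `ψ_K` satisfying
`Tr_{K/K₀} ∘ ψ_K = ψ`.  If `L = Σ O_K x_i + Σ 𝔞_j y_j` with respect to a symplectic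
`K`-basis of `(V, ψ_K)` and nonzero fractional ideals `𝔞_j`, then `L` is self-dual with
respect to `ψ` if and only if all the invariant factors `𝔞_j` equal the inverse
different `D_{K/K₀}^{-1}`. -/
theorem stmt6
    (A : Type) [CommRing A] [IsDomain A] [IsDedekindDomain A]
    (K₀ : Type) [Field K₀] [Algebra A K₀] [IsFractionRing A K₀]
    (K : Type) [Field K] [Algebra K₀ K] [FiniteDimensional K₀ K]
    [Algebra.IsSeparable K₀ K]
    (B : Type) [CommRing B] [Algebra A B] [Algebra B K] [Algebra A K]
    [IsScalarTower A B K] [IsScalarTower A K₀ K] [IsIntegralClosure B A K]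
    (V : Type) [AddCommGroup V] [Module K V] [Module K₀ V] [IsScalarTower K₀ K V]
    (n : ℕ)
    (ψK : V →ₗ[K] V →ₗ[K] K)
    (ψ : V →ₗ[K₀] V →ₗ[K₀] K₀)
    (hψ : ∀ x y, ψ x y = Algebra.trace K₀ K (ψK x y))
    (halt : ∀ x, ψK x x = 0)
    (hnd : ∀ x, (∀ y, ψK x y = 0) → x = 0)
    -- a symplectic K-basis of (V, ψ_K)
    (b : Module.Basis (Fin n ⊕ Fin n) K V)
    (hbxx : ∀ i j, ψK (b (Sum.inl i)) (b (Sum.inl j)) = 0)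
    (hbyy : ∀ i j, ψK (b (Sum.inr i)) (b (Sum.inr j)) = 0)
    (hbxy : ∀ i j, ψK (b (Sum.inl i)) (b (Sum.inr j)) = if i = j then 1 else 0)
    -- the invariant factors: nonzero fractional O_K-ideals
    (𝔞 : Fin n → Submodule B K)
    (h𝔞ne : ∀ j, 𝔞 j ≠ ⊥)
    (h𝔞fr : ∀ j, ∃ s : B, s ≠ 0 ∧
      ∀ c ∈ 𝔞 j, ∃ t : B, algebraMap B K s * c = algebraMap B K t)
    -- the lattice L = Σ O_K x_i + Σ 𝔞_j y_j
    (L : Set V)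
    (hL : L = {v | ∃ (c : Fin n → B) (d : Fin n → K), (∀ j, d j ∈ 𝔞 j) ∧
      v = (∑ i, algebraMap B K (c i) • b (Sum.inl i))
          + ∑ j, d j • b (Sum.inr j)}) :
    -- L is self-dual ↔ all invariant factors equal the inverse different
    {x : V | ∀ y ∈ L, ψ x y ∈ Set.range (algebraMap A K₀)} = L ↔
      ∀ j, (𝔞 j : Set K) =
        {c : K | ∀ r : B,
          Algebra.trace K₀ K (c * algebraMap B K r) ∈ Set.range (algebraMap A K₀)} :=
  stmt6_general A K₀ K B V n ψK ψ hψ halt b hbxx hbyy hbxy 𝔞 L hL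
end

section
/- Let p ≡ 1 (mod 4) be a prime, F = ℚ(√p) with completion F₂ = F ⊗_ℚ ℚ₂, A₂ = ℤ[√p] ⊗ ℤ₂, and O_{F₂} the maximal order. Let (V₂, ψ₂) be a 4-dimensional symplectic ℚ₂-space which is a rank-2 free F₂-module with ψ₂(ax, y) = ψ₂(x, ay) for a ∈ F₂. Then there is no self-dual A₂-lattice L in (V₂, ψ₂) with L ≅ O_{F₂} ⊕ A₂ as an A₂-module. -/
/-!
Since `p ≡ 1 (mod 4)`, `t = (1 + √p)/2` satisfies `t² = t + (p - 1)/4`, so `O = ℤ₂[t]` is an order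
containing `A = ℤ₂[√p]`. If `L = O e₀ + A e₁` were self-dual, `ψ` would be `ℤ₂`-valued on `L`;
as `ψ(x, a x) = 0` for an alternating form with `ψ(a x, y) = ψ(x, a y)`, this forces
`ψ(t e₁, L) ⊆ ℤ₂`, i.e. `t e₁ ∈ L^∨ = L`. But `t ∉ A`, because `2` is not a unit of `ℤ₂`.
-/

section HalfSqrt

variable {F : Type*} [CommRing F] {s t m : F}

theorem mul_self_eq_of_two_mul_eq (h2 : IsUnit (2 : F)) (ht : 2 * t = 1 + s)
    (hs : s ^ 2 = 4 * m + 1) : t * t = t + m := by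
  refine h2.mul_left_cancel (h2.mul_left_cancel ?_)
  linear_combination (2 * t - 1 + s) * ht + hs

theorem mul_sqrt_eq_of_two_mul_eq (h2 : IsUnit (2 : F)) (ht : 2 * t = 1 + s)
    (hs : s ^ 2 = 4 * m + 1) : t * s = t + 2 * m := by
  refine h2.mul_left_cancel ?_
  linear_combination (s - 1) * ht + hs

end HalfSqrt

namespace LinearMap.IsAlt

variable {K F V : Type*} [CommRing K] [CommRing F]
  [AddCommGroup V] [Module K V] [Module F V] {ψ : V →ₗ[K] V →ₗ[K] K}

theorem apply_smul_swap (hψ : ψ.IsAlt) (hbal : ∀ (a : F) (x y : V), ψ (a • x) y = ψ x (a • y))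
    (a : F) (x y : V) : ψ x (a • y) = -ψ y (a • x) := by
  rw [← hbal, hψ.neg]

theorem apply_smul_self [NoZeroDivisors K] [NeZero (2 : K)] (hψ : ψ.IsAlt)
    (hbal : ∀ (a : F) (x y : V), ψ (a • x) y = ψ x (a • y)) (a : F) (x : V) :
    ψ x (a • x) = 0 := by
  have h : ψ x (a • x) + ψ x (a • x) = 0 := by
    nth_rw 2 [hψ.apply_smul_swap hbal]
    exact add_neg_cancel _
  rw [← two_mul] at h
  exact (mul_eq_zero.mp h).resolve_left two_ne_zero

end LinearMap.IsAlt

section Lattice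

variable (S K : Type*) {F V : Type*} [CommRing S] [CommRing K] [Algebra S K] [CommRing F]
  [Algebra K F] [AddCommGroup V] [Module F V]

variable {K} in
def dualLattice [Module K V] (ψ : V →ₗ[K] V →ₗ[K] K) (L : Set V) : Set V :=
  {x | ∀ y ∈ L, ψ x y ∈ (algebraMap S K).range}

/-- The lattice `O·e₀ + A·e₁`, where `O = S + S t` and `A = S + S s`. -/
def mixedLattice (e : Module.Basis (Fin 2) F V) (t s : F) : Set V :=
  {v | ∃ a b c d : S, v = ((algebraMap S K a • (1 : F) + algebraMap S K b • t) • e 0)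
    + ((algebraMap S K c • (1 : F) + algebraMap S K d • s) • e 1)}

variable {S K} {e : Module.Basis (Fin 2) F V} {t s : F}

theorem smul_basis_one_notMem_mixedLattice (hind : LinearIndependent K ![1, s])
    (hinj : Function.Injective (algebraMap S K)) (h2 : ¬IsUnit (2 : S)) (ht : 2 * t = 1 + s) :
    t • e 1 ∉ mixedLattice S K e t s := by
  rintro ⟨a, b, c, d, h⟩
  have htA : t = algebraMap S K c • 1 + algebraMap S K d • s := by
    simpa [Finsupp.single_apply] using congrArg (e.repr · 1) h
  have h2t : (2 * algebraMap S K c) • (1 : F) + (2 * algebraMap S K d) • s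
      = (1 : K) • 1 + (1 : K) • s := by
    rw [mul_smul, mul_smul, ← smul_add, ← htA, one_smul, one_smul, ← ht, Algebra.smul_def,
      map_ofNat]
  obtain ⟨hc, -⟩ := hind.eq_of_pair h2t
  rw [← map_ofNat (algebraMap S K) 2, ← map_mul, ← map_one (algebraMap S K)] at hc
  exact h2 (.of_mul_eq_one _ (hinj hc))

variable [Module K V] {ψ : V →ₗ[K] V →ₗ[K] K} (hbal : ∀ (a : F) (x y : V), ψ (a • x) y = ψ x (a • y))
  (h2 : IsUnit (2 : F)) (ht : 2 * t = 1 + s) {m : ℕ} (hs : s ^ 2 = 4 * (m : F) + 1)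
  (hL : mixedLattice S K e t s ⊆ dualLattice S ψ (mixedLattice S K e t s))
include hbal h2 ht hs hL

theorem apply_basis_zero_smul_basis_one_mem :
    ψ (e 0) (t • e 1) ∈ (algebraMap S K).range := by
  have hmem (a b c d : S) : ((algebraMap S K a • (1 : F) + algebraMap S K b • t) • e 0)
      + ((algebraMap S K c • (1 : F) + algebraMap S K d • s) • e 1) ∈ mixedLattice S K e t s :=
    ⟨a, b, c, d, rfl⟩
  have hts : ψ (t • e 0) (s • e 1) ∈ (algebraMap S K).range :=
    hL (by simpa using hmem 0 1 0 0) _ (by simpa using hmem 0 0 0 1)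
  have h01 : ψ (e 0) (e 1) ∈ (algebraMap S K).range :=
    hL (by simpa using hmem 1 0 0 0) _ (by simpa using hmem 0 0 1 0)
  have hexp : ψ (t • e 0) (s • e 1) = ψ (e 0) (t • e 1) + (2 * m) • ψ (e 0) (e 1) := by
    rw [hbal, smul_smul, mul_sqrt_eq_of_two_mul_eq h2 ht hs, add_smul, map_add,
      show 2 * (m : F) = ((2 * m : ℕ) : F) by push_cast; ring, Nat.cast_smul_eq_nsmul, map_nsmul]
  rw [eq_sub_of_add_eq hexp.symm]
  exact sub_mem hts (nsmul_mem h01 _)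

theorem smul_basis_one_mem_dualLattice [IsScalarTower K F V] [NoZeroDivisors K] [NeZero (2 : K)]
    (hψ : ψ.IsAlt) : t • e 1 ∈ dualLattice S ψ (mixedLattice S K e t s) := by
  have hte₀ : ψ (e 1) (t • e 0) ∈ (algebraMap S K).range := by
    rw [hψ.apply_smul_swap hbal, neg_mem_iff]
    exact apply_basis_zero_smul_basis_one_mem hbal h2 ht hs hL
  have h10 : ψ (e 1) (e 0) ∈ (algebraMap S K).range :=
    hL ⟨0, 0, 1, 0, by simp⟩ _ ⟨1, 0, 0, 0, by simp⟩
  rintro _ ⟨a, b, c, d, rfl⟩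
  have hAe₁ : ψ (t • e 1) ((algebraMap S K c • (1 : F) + algebraMap S K d • s) • e 1) = 0 := by
    rw [hbal, smul_smul]
    exact hψ.apply_smul_self hbal _ _
  have hOe₀ : ψ (t • e 1) ((algebraMap S K a • (1 : F) + algebraMap S K b • t) • e 0)
      = algebraMap S K a * ψ (e 1) (t • e 0)
        + algebraMap S K b * (ψ (e 1) (t • e 0) + m • ψ (e 1) (e 0)) := by
    rw [hbal, smul_smul, mul_add, mul_smul_comm, mul_smul_comm, mul_one,
      mul_self_eq_of_two_mul_eq h2 ht hs]
    simp [add_smul, smul_assoc, Nat.cast_smul_eq_nsmul, mul_add]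
  rw [map_add, hAe₁, add_zero, hOe₀]
  exact add_mem (mul_mem ⟨a, rfl⟩ hte₀) (mul_mem ⟨b, rfl⟩ (add_mem hte₀ (nsmul_mem h10 m)))

end Lattice

theorem stmt9_general
    (p : ℕ) (hp4 : p % 4 = 1)
    (F₂ : Type) [CommRing F₂] [Algebra ℚ_[2] F₂]
    (s : F₂) (hs : s ^ 2 = (p : F₂))
    (bF : Module.Basis (Fin 2) ℚ_[2] F₂) (hb0 : bF 0 = 1) (hb1 : bF 1 = s)
    (t : F₂) (ht : 2 * t = 1 + s)   -- t = (1 + √p)/2, so O_{F₂} = ℤ₂[t]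
    (V : Type) [AddCommGroup V] [Module ℚ_[2] V] [Module F₂ V]
    [IsScalarTower ℚ_[2] F₂ V]
    (ψ : V →ₗ[ℚ_[2]] V →ₗ[ℚ_[2]] ℚ_[2])
    (halt : ∀ x, ψ x x = 0)
    (hherm : ∀ (a : F₂) (x y : V), ψ (a • x) y = ψ x (a • y)) :
    ¬ ∃ e : Module.Basis (Fin 2) F₂ V,
      (let L : Set V := {v | ∃ a b c d : ℤ_[2],
         v = (((a : ℚ_[2]) • (1 : F₂) + (b : ℚ_[2]) • t) • e 0)
             + (((c : ℚ_[2]) • (1 : F₂) + (d : ℚ_[2]) • s) • e 1)}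
       {x : V | ∀ y ∈ L, ψ x y ∈ Set.range ((↑) : ℤ_[2] → ℚ_[2])} = L) := by
  rintro ⟨e, hd⟩
  change dualLattice ℤ_[2] ψ (mixedLattice ℤ_[2] ℚ_[2] e t s)
    = mixedLattice ℤ_[2] ℚ_[2] e t s at hd
  obtain ⟨m, rfl⟩ : ∃ m : ℕ, p = 4 * m + 1 := ⟨p / 4, by omega⟩
  have h2 : IsUnit (2 : F₂) := by
    simpa only [map_ofNat] using (IsUnit.mk0 (2 : ℚ_[2]) two_ne_zero).map (algebraMap ℚ_[2] F₂)
  have hs' : s ^ 2 = 4 * (m : F₂) + 1 := by rw [hs]; push_cast; ring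
  have hind : LinearIndependent ℚ_[2] ![1, s] := by
    convert bF.linearIndependent
    ext i
    fin_cases i <;> simp [hb0, hb1]
  refine smul_basis_one_notMem_mixedLattice (e := e) hind (IsFractionRing.injective ℤ_[2] ℚ_[2])
    (by simpa using PadicInt.p_nonunit (p := 2)) ht ?_
  rw [← hd]
  exact smul_basis_one_mem_dualLattice hherm h2 ht hs' hd.ge halt

/-- Let `p ≡ 1 (mod 4)` be prime, `F₂ = ℚ(√p) ⊗ ℚ₂` (a quadratic
étale ℚ₂-algebra generated by `s` with `s² = p`), `O_{F₂} = ℤ₂[(1+s)/2]` the maximal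
order and `A₂ = ℤ₂[√p]`.  Let `(V₂, ψ₂)` be a 4-dimensional symplectic ℚ₂-space which
is a rank-2 free `F₂`-module with `ψ₂(ax,y) = ψ₂(x,ay)`.  Then there is no self-dual
`A₂`-lattice `L` in `(V₂, ψ₂)` with `L ≅ O_{F₂} ⊕ A₂`, i.e. no `F₂`-basis `e₀, e₁`
such that `L = O_{F₂}·e₀ + A₂·e₁` is self-dual. -/
theorem stmt9
    (p : ℕ) [Fact p.Prime] (hp4 : p % 4 = 1)
    (F₂ : Type) [CommRing F₂] [Algebra ℚ_[2] F₂]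
    (s : F₂) (hs : s ^ 2 = (p : F₂))
    (bF : Module.Basis (Fin 2) ℚ_[2] F₂) (hb0 : bF 0 = 1) (hb1 : bF 1 = s)
    (t : F₂) (ht : 2 * t = 1 + s)   -- t = (1 + √p)/2, so O_{F₂} = ℤ₂[t]
    (V : Type) [AddCommGroup V] [Module ℚ_[2] V] [Module F₂ V]
    [IsScalarTower ℚ_[2] F₂ V]
    (ψ : V →ₗ[ℚ_[2]] V →ₗ[ℚ_[2]] ℚ_[2])
    (halt : ∀ x, ψ x x = 0)
    (hnd : ∀ x, (∀ y, ψ x y = 0) → x = 0)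
    (hherm : ∀ (a : F₂) (x y : V), ψ (a • x) y = ψ x (a • y)) :
    ¬ ∃ e : Module.Basis (Fin 2) F₂ V,
      (let L : Set V := {v | ∃ a b c d : ℤ_[2],
         v = (((a : ℚ_[2]) • (1 : F₂) + (b : ℚ_[2]) • t) • e 0)
             + (((c : ℚ_[2]) • (1 : F₂) + (d : ℚ_[2]) • s) • e 1)}
       {x : V | ∀ y ∈ L, ψ x y ∈ Set.range ((↑) : ℤ_[2] → ℚ_[2])} = L) :=
  stmt9_general p hp4 F₂ s hs bF hb0 hb1 t ht V ψ halt hherm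
end
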